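/- Let X₁, X₂ be real random variables in L² and let F be an event such that X₁ and X₂·1_F are independent. Then Cov(X₁, X₂) = Cov(X₁, X₂ 1_{F^c}), and if moreover X₂ ∈ L⁴ then |Cov(X₁, X₂)| ≤ √Var(X₁) · (E[X₂⁴])^{1/4} · P(F^c)^{1/4}. -/

import Mathlib

open MeasureTheory ProbabilityTheory

/-! Since `X₂ = X₂ 1_F + X₂ 1_{Fᶜ}`, bilinearity of the covariance and the independence of `X₁`
and `X₂ 1_F` give `Cov(X₁, X₂) = Cov(X₁, X₂ 1_{Fᶜ})`. Cauchy–Schwarz bounds the latter by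
`√Var(X₁) · √Var(X₂ 1_{Fᶜ})`, and `Var(X₂ 1_{Fᶜ}) ≤ E[X₂² 1_{Fᶜ}] ≤ √E[X₂⁴] · √P(Fᶜ)` by
Cauchy–Schwarz once more. -/

lemma sqrt_sqrt_eq_rpow {x : ℝ} (hx : 0 ≤ x) : √√x = x ^ (1 / 4 : ℝ) := by
  rw [Real.sqrt_eq_rpow, Real.sqrt_eq_rpow, ← Real.rpow_mul hx]
  norm_num

section Integral

variable {α : Type*} [MeasurableSpace α] {μ : Measure α} {f g : α → ℝ}

lemma abs_integral_mul_le_sqrt_mul_sqrt (hf : MemLp f 2 μ) (hg : MemLp g 2 μ) :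
    |∫ a, f a * g a ∂μ| ≤ √(∫ a, f a ^ 2 ∂μ) * √(∫ a, g a ^ 2 ∂μ) := by
  have holder := integral_mul_norm_le_Lp_mul_Lq (μ := μ) Real.HolderConjugate.two_two
    (by simpa using hf) (by simpa using hg)
  simp only [Real.norm_eq_abs, Real.rpow_two, sq_abs, ← Real.sqrt_eq_rpow] at holder
  calc |∫ a, f a * g a ∂μ| ≤ ∫ a, |f a| * |g a| ∂μ := by
        simpa only [Real.norm_eq_abs, abs_mul] using
          norm_integral_le_integral_norm (fun a => f a * g a)
    _ ≤ _ := holder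

lemma MeasureTheory.MemLp.sq_of_four (hf : MemLp f 4 μ) : MemLp (fun a => f a ^ 2) 2 μ := by
  refine (memLp_two_iff_integrable_sq (hf.aestronglyMeasurable.pow 2)).2 ?_
  refine (hf.integrable_norm_pow (p := 4) (by norm_num)).congr (ae_of_all _ fun a => ?_)
  simp only [Real.norm_eq_abs, Even.pow_abs ⟨2, rfl⟩, Pi.pow_apply]
  ring

lemma integral_indicator_sq_le [IsFiniteMeasure μ] {s : Set α} (hs : MeasurableSet s)
    (hf : MemLp f 4 μ) :
    ∫ a, s.indicator f a ^ 2 ∂μ ≤ √(∫ a, f a ^ 4 ∂μ) * √(μ.real s) := by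
  have h_sq : ∀ a, s.indicator f a ^ 2 = f a ^ 2 * s.indicator 1 a := fun a => by
    by_cases ha : a ∈ s <;> simp [ha]
  have h_ind : MemLp (s.indicator (1 : α → ℝ)) 2 μ := (memLp_const 1).indicator hs
  calc ∫ a, s.indicator f a ^ 2 ∂μ
      ≤ |∫ a, f a ^ 2 * s.indicator 1 a ∂μ| := by simp only [h_sq]; exact le_abs_self _
    _ ≤ √(∫ a, (f a ^ 2) ^ 2 ∂μ) * √(∫ a, s.indicator 1 a ^ 2 ∂μ) :=
        abs_integral_mul_le_sqrt_mul_sqrt hf.sq_of_four h_ind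
    _ = √(∫ a, f a ^ 4 ∂μ) * √(μ.real s) := by
        congr 2
        · exact integral_congr_ae (ae_of_all _ fun a => by ring)
        · simp only [← integral_indicator_one hs]
          exact integral_congr_ae (ae_of_all _ fun a => by by_cases ha : a ∈ s <;> simp [ha])

end Integral

section Covariance

variable {Ω : Type*} [MeasurableSpace Ω] {μ : Measure Ω} {X Y : Ω → ℝ}

lemma abs_covariance_le_sqrt_variance_mul_sqrt_variance [IsFiniteMeasure μ]
    (hX : MemLp X 2 μ) (hY : MemLp Y 2 μ) :
    |cov[X, Y; μ]| ≤ √Var[X; μ] * √Var[Y; μ] := by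
  rw [covariance, variance_eq_integral hX.aemeasurable, variance_eq_integral hY.aemeasurable]
  exact abs_integral_mul_le_sqrt_mul_sqrt (hX.sub (memLp_const _)) (hY.sub (memLp_const _))

lemma covariance_eq_covariance_indicator_compl [IsFiniteMeasure μ] {s : Set Ω}
    (hs : MeasurableSet s) (hX : MemLp X 2 μ) (hY : MemLp Y 2 μ)
    (hindep : IndepFun X (s.indicator Y) μ) :
    cov[X, Y; μ] = cov[X, sᶜ.indicator Y; μ] := by
  conv_lhs => rw [← s.indicator_self_add_compl Y]
  rw [covariance_add_right hX (hY.indicator hs) (hY.indicator hs.compl),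
    hindep.covariance_eq_zero hX (hY.indicator hs), zero_add]

lemma sqrt_variance_indicator_le [IsProbabilityMeasure μ] {s : Set Ω} (hs : MeasurableSet s)
    (hY : MemLp Y 4 μ) :
    √Var[s.indicator Y; μ] ≤ (∫ ω, Y ω ^ 4 ∂μ) ^ (1 / 4 : ℝ) * μ.real s ^ (1 / 4 : ℝ) := by
  have h_var : Var[s.indicator Y; μ] ≤ √(∫ ω, Y ω ^ 4 ∂μ) * √(μ.real s) :=
    (variance_le_expectation_sq (hY.aestronglyMeasurable.indicator hs)).trans
      (integral_indicator_sq_le hs hY)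
  have h_int : 0 ≤ ∫ ω, Y ω ^ 4 ∂μ := integral_nonneg fun ω => by positivity
  calc √Var[s.indicator Y; μ] ≤ √(√(∫ ω, Y ω ^ 4 ∂μ) * √(μ.real s)) := Real.sqrt_le_sqrt h_var
    _ = _ := by
        rw [Real.sqrt_mul (Real.sqrt_nonneg _), sqrt_sqrt_eq_rpow h_int,
          sqrt_sqrt_eq_rpow measureReal_nonneg]

end Covariance

/-- If `X₁, X₂ ∈ L²` and `X₁` is independent of `X₂·1_F`, then
`Cov(X₁, X₂) = Cov(X₁, X₂ 1_{Fᶜ})`, and if moreover `X₂ ∈ L⁴` then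
`|Cov(X₁,X₂)| ≤ √Var(X₁) · (E[X₂⁴])^{1/4} · P(Fᶜ)^{1/4}`. -/
theorem covariance_indicator_bound {Ω : Type*} [MeasurableSpace Ω]
    (μ : Measure Ω) [IsProbabilityMeasure μ]
    (X₁ X₂ : Ω → ℝ) (F : Set Ω) (hF : MeasurableSet F)
    (h1 : MemLp X₁ 2 μ) (h2 : MemLp X₂ 2 μ)
    (hindep : IndepFun X₁ (F.indicator X₂) μ) :
    ((∫ ω, X₁ ω * X₂ ω ∂μ) - (∫ ω, X₁ ω ∂μ) * (∫ ω, X₂ ω ∂μ)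
        = (∫ ω, X₁ ω * Fᶜ.indicator X₂ ω ∂μ)
          - (∫ ω, X₁ ω ∂μ) * (∫ ω, Fᶜ.indicator X₂ ω ∂μ)) ∧
    (MemLp X₂ 4 μ →
      |(∫ ω, X₁ ω * X₂ ω ∂μ) - (∫ ω, X₁ ω ∂μ) * (∫ ω, X₂ ω ∂μ)|
        ≤ Real.sqrt (variance X₁ μ) * (∫ ω, (X₂ ω) ^ 4 ∂μ) ^ ((1 : ℝ) / 4)
            * ((μ Fᶜ).toReal) ^ ((1 : ℝ) / 4)) := by
  have hZ : MemLp (Fᶜ.indicator X₂) 2 μ := h2.indicator hF.compl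
  have hcov := covariance_eq_covariance_indicator_compl hF h1 h2 hindep
  have hcov_X₂ := covariance_eq_sub h1 h2
  have hcov_Z := covariance_eq_sub h1 hZ
  simp only [Pi.mul_apply] at hcov_X₂ hcov_Z
  refine ⟨by rw [← hcov_X₂, ← hcov_Z, hcov], fun h4 => ?_⟩
  calc |_| = |cov[X₁, Fᶜ.indicator X₂; μ]| := by rw [← hcov_X₂, hcov]
    _ ≤ √Var[X₁; μ] * √Var[Fᶜ.indicator X₂; μ] :=
        abs_covariance_le_sqrt_variance_mul_sqrt_variance h1 hZ
    _ ≤ _ := by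
        rw [mul_assoc]
        gcongr
        exact sqrt_variance_indicator_le hF.compl h4
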